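/- arXiv:1705.04537 — 3 statements merged into one kernel-verified Lean document; each statement's English description precedes it below -/
import Mathlib

section
/- For fixed α ∈ (0,1) and v₁ ∈ ℝ, the elementary quantile score S_{v₁}(x₁, y) = (1{y ≤ x₁} − α)(1{v₁ ≤ x₁} − 1{v₁ ≤ y}) is a consistent scoring function for the α-quantile: for every random variable Y with distribution F having a unique α-quantile q, and every x₁ ∈ ℝ, E[S_{v₁}(q, Y)] ≤ E[S_{v₁}(x₁, Y)]. -/
open MeasureTheory ProbabilityTheory

lemma eqsc_integral_eval (α v₁ x : ℝ) (μ : Measure ℝ) [IsProbabilityMeasure μ] :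
    ∫ y, ((if y ≤ x then (1 : ℝ) else 0) - α) *
        ((if v₁ ≤ x then (1 : ℝ) else 0) - (if v₁ ≤ y then (1 : ℝ) else 0)) ∂μ
      = if v₁ ≤ x then (1 - α) * (μ (Set.Iio v₁)).toReal
        else α * (1 - (μ (Set.Iio v₁)).toReal) := by
  by_cases h : v₁ ≤ x
  · have hfun : ∀ y, ((if y ≤ x then (1 : ℝ) else 0) - α) *
        ((if v₁ ≤ x then (1 : ℝ) else 0) - (if v₁ ≤ y then (1 : ℝ) else 0))
        = (Set.Iio v₁).indicator (fun _ => (1 - α)) y := by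
      intro y
      by_cases hy : v₁ ≤ y
      · simp [Set.indicator, h, hy, not_lt.2 hy]
      · have hyv : y < v₁ := lt_of_not_ge hy
        simp [Set.indicator, h, hy, hyv, le_trans hyv.le h]
    rw [integral_congr_ae (Filter.Eventually.of_forall hfun),
      integral_indicator_const _ measurableSet_Iio, smul_eq_mul, if_pos h, mul_comm, measureReal_def]
  · have hfun : ∀ y, ((if y ≤ x then (1 : ℝ) else 0) - α) *
        ((if v₁ ≤ x then (1 : ℝ) else 0) - (if v₁ ≤ y then (1 : ℝ) else 0))
        = (Set.Ici v₁).indicator (fun _ => α) y := by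
      intro y
      by_cases hy : v₁ ≤ y
      · have hyx : ¬ y ≤ x := fun hc => h (le_trans hy hc)
        simp [Set.indicator, h, hy, hyx]
      · simp [Set.indicator, h, hy]
    rw [integral_congr_ae (Filter.Eventually.of_forall hfun),
      integral_indicator_const _ measurableSet_Ici, smul_eq_mul, if_neg h]
    have hc : μ (Set.Ici v₁) = 1 - μ (Set.Iio v₁) := by
      rw [← Set.compl_Iio, measure_compl measurableSet_Iio (measure_ne_top _ _),
        measure_univ]
    rw [measureReal_def, hc, ENNReal.toReal_sub_of_le prob_le_one ENNReal.one_ne_top, ENNReal.toReal_one,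
      mul_comm]

/-- The elementary quantile score
`S_{v₁}(x₁, y) = (1{y ≤ x₁} − α)(1{v₁ ≤ x₁} − 1{v₁ ≤ y})`
is consistent for the α-quantile: if the distribution `μ` of `Y` has
the unique α-quantile `q` (i.e. `q` is the unique point with
`F(q⁻) ≤ α ≤ F(q)`), then for every `x₁`,
`E[S_{v₁}(q, Y)] ≤ E[S_{v₁}(x₁, Y)]`. -/
theorem elementary_quantile_score_consistent (α v₁ : ℝ)
    (hα : α ∈ Set.Ioo (0 : ℝ) 1)
    (μ : Measure ℝ) [IsProbabilityMeasure μ] (q : ℝ)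
    (hq : ∀ x : ℝ, ((μ (Set.Iio x)).toReal ≤ α ∧ α ≤ cdf μ x) ↔ x = q)
    (x₁ : ℝ) :
    ∫ y, ((if y ≤ q then (1 : ℝ) else 0) - α) *
        ((if v₁ ≤ q then (1 : ℝ) else 0) - (if v₁ ≤ y then (1 : ℝ) else 0)) ∂μ ≤
      ∫ y, ((if y ≤ x₁ then (1 : ℝ) else 0) - α) *
        ((if v₁ ≤ x₁ then (1 : ℝ) else 0) - (if v₁ ≤ y then (1 : ℝ) else 0)) ∂μ := by
  obtain ⟨hq1, hq2⟩ := (hq q).2 rfl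
  rw [eqsc_integral_eval, eqsc_integral_eval]
  set t : ℝ := (μ (Set.Iio v₁)).toReal with ht
  have ht0 : 0 ≤ t := ENNReal.toReal_nonneg
  have ht1 : t ≤ 1 := by
    rw [ht]
    exact ENNReal.toReal_le_of_le_ofReal zero_le_one (by simpa using prob_le_one)
  by_cases h1 : v₁ ≤ q <;> by_cases h2 : v₁ ≤ x₁
  · simp [h1, h2]
  · -- v₁ ≤ q, ¬ v₁ ≤ x₁ : need (1-α)t ≤ α(1-t), i.e. t ≤ α
    simp only [h1, h2, if_true, if_false]
    have htα : t ≤ α := le_trans (by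
        rw [ht]
        exact ENNReal.toReal_mono (measure_ne_top _ _)
          (measure_mono (Set.Iio_subset_Iio h1))) hq1
    nlinarith [hα.1, hα.2]
  · -- ¬ v₁ ≤ q, v₁ ≤ x₁ : need α(1-t) ≤ (1-α)t, i.e. α ≤ t
    simp only [h1, h2, if_true, if_false]
    have hsub : Set.Iic q ⊆ Set.Iio v₁ := fun y hy =>
      Set.mem_Iio.2 (lt_of_le_of_lt (Set.mem_Iic.1 hy) (lt_of_not_ge h1))
    have hαt : α ≤ t := by
      refine le_trans hq2 ?_
      rw [cdf_eq_real, measureReal_def, ht]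
      exact ENNReal.toReal_mono (measure_ne_top _ _) (measure_mono hsub)
    nlinarith [hα.1, hα.2]
  · simp [h1, h2]
end

section
/- For a distribution F with finite mean and continuous, strictly increasing CDF, the function g(x₁) = x₁(α − F(x₁)) + ∫_{(−∞, x₁]} y dF(y) is concave in x₁ and attains its maximum at x₁ = VaR_α(F) (the unique point with F(x₁) = α), with maximum value g(VaR_α(F)) = α·ES_α(F), where ES_α(F) = (1/α) E[Y·1{Y ≤ VaR_α(F)}]. -/
open MeasureTheory ProbabilityTheory

/-- For a distribution with continuous strictly increasing CDF `F` and finite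
mean, `g(x₁) = x₁(α − F(x₁)) + ∫_{(−∞,x₁]} y dF(y)` is concave, attains its
maximum at `x₁ = VaR_α(F)` (the unique point with `F(x₁) = α`), and the
maximum value is `α · ES_α(F)` with `ES_α(F) = (1/α) E[Y·1{Y ≤ VaR_α(F)}]`. -/
theorem put_value_concave_max (α : ℝ) (hα : α ∈ Set.Ioo (0 : ℝ) 1)
    (μ : Measure ℝ) [IsProbabilityMeasure μ] (hmean : Integrable id μ)
    (hcont : Continuous fun x => cdf μ x) (hsm : StrictMono fun x => cdf μ x)
    (q : ℝ) (hq : cdf μ q = α) :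
    ConcaveOn ℝ Set.univ
        (fun x₁ => x₁ * (α - cdf μ x₁) + ∫ y in Set.Iic x₁, y ∂μ) ∧
    (∀ x₁ : ℝ, x₁ * (α - cdf μ x₁) + (∫ y in Set.Iic x₁, y ∂μ) ≤
        q * (α - cdf μ q) + ∫ y in Set.Iic q, y ∂μ) ∧
    q * (α - cdf μ q) + (∫ y in Set.Iic q, y ∂μ) =
      α * ((1 / α) * ∫ y in Set.Iic q, y ∂μ) := by
  have hint : ∀ x : ℝ, Integrable (fun y => max (x - y) 0) μ := fun x =>
    ((integrable_const x).sub hmean).pos_part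
  -- key identity: g(x) = α x - ∫ max (x - y) 0
  have key : ∀ x : ℝ, x * (α - cdf μ x) + (∫ y in Set.Iic x, y ∂μ)
      = α * x - ∫ y, max (x - y) 0 ∂μ := by
    intro x
    have hsplit : (∫ y in Set.Iic x, max (x - y) 0 ∂μ)
        + (∫ y in (Set.Iic x)ᶜ, max (x - y) 0 ∂μ) = ∫ y, max (x - y) 0 ∂μ :=
      integral_add_compl measurableSet_Iic (hint x)
    have h1 : (∫ y in Set.Iic x, max (x - y) 0 ∂μ) = ∫ y in Set.Iic x, (x - y) ∂μ := by
      refine setIntegral_congr_fun measurableSet_Iic fun y hy => ?_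
      exact max_eq_left (by simp only [Set.mem_Iic] at hy; linarith)
    have h2 : (∫ y in (Set.Iic x)ᶜ, max (x - y) 0 ∂μ) = 0 := by
      rw [show (Set.Iic x)ᶜ = Set.Ioi x by simp]
      refine integral_eq_zero_of_ae ?_
      filter_upwards [ae_restrict_mem measurableSet_Ioi] with y hy
      exact max_eq_right (by simp only [Set.mem_Ioi] at hy; linarith)
    have h3 : (∫ y in Set.Iic x, (x - y) ∂μ)
        = x * cdf μ x - ∫ y in Set.Iic x, y ∂μ := by
      have hid : Integrable (fun y : ℝ => y) (μ.restrict (Set.Iic x)) := hmean.integrableOn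
      rw [integral_sub ((integrableOn_const (C := x) (measure_ne_top _ _) : Integrable (fun _ : ℝ => x) (μ.restrict (Set.Iic x)))) hid,
        setIntegral_const, cdf_eq_real, smul_eq_mul, mul_comm]
    rw [h1, h2, h3, add_zero] at hsplit
    rw [← hsplit]; ring
  have hpt : ∀ x z a b : ℝ, 0 ≤ a → 0 ≤ b → a + b = 1 → ∀ y : ℝ,
      max (a * x + b * z - y) 0 ≤ a * max (x - y) 0 + b * max (z - y) 0 := by
    intro x z a b ha hb hab y
    have h1 : a * (x - y) ≤ a * max (x - y) 0 :=
      mul_le_mul_of_nonneg_left (le_max_left _ _) ha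
    have h2 : b * (z - y) ≤ b * max (z - y) 0 :=
      mul_le_mul_of_nonneg_left (le_max_left _ _) hb
    have h3 : 0 ≤ a * max (x - y) 0 := mul_nonneg ha (le_max_right _ _)
    have h4 : 0 ≤ b * max (z - y) 0 := mul_nonneg hb (le_max_right _ _)
    refine max_le ?_ (by linarith)
    have : a * x + b * z - y = a * (x - y) + b * (z - y) := by
      have : a * y + b * y = y := by rw [← add_mul, hab, one_mul]
      ring_nf
      nlinarith [this]
    linarith [this]
  refine ⟨?_, ?_, ?_⟩
  · -- concavity
    refine ⟨convex_univ, fun x _ z _ a b ha hb hab => ?_⟩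
    simp only [smul_eq_mul, key]
    have hmono : ∫ y, max (a * x + b * z - y) 0 ∂μ
        ≤ ∫ y, (a * max (x - y) 0 + b * max (z - y) 0) ∂μ :=
      integral_mono (hint _) (((hint x).const_mul a).add ((hint z).const_mul b))
        (hpt x z a b ha hb hab)
    rw [integral_add ((hint x).const_mul a) ((hint z).const_mul b),
      integral_const_mul, integral_const_mul] at hmono
    linarith [hmono]
  · -- maximum at q
    intro x
    rw [key x, key q]
    have hpt2 : ∀ y : ℝ, (Set.Iic q).indicator (fun _ => x - q) y
        ≤ max (x - y) 0 - max (q - y) 0 := by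
      intro y
      by_cases hy : y ∈ Set.Iic q
      · simp only [Set.indicator_of_mem hy]
        simp only [Set.mem_Iic] at hy
        have : max (q - y) 0 = q - y := max_eq_left (by linarith)
        have h2 : x - y ≤ max (x - y) 0 := le_max_left _ _
        linarith
      · simp only [Set.indicator_of_notMem hy]
        simp only [Set.mem_Iic, not_le] at hy
        have : max (q - y) 0 = 0 := max_eq_right (by linarith)
        have h2 : (0:ℝ) ≤ max (x - y) 0 := le_max_right _ _
        linarith
    have hmono : ∫ y, (Set.Iic q).indicator (fun _ => x - q) y ∂μ
        ≤ ∫ y, (max (x - y) 0 - max (q - y) 0) ∂μ :=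
      integral_mono ((integrable_const (x - q)).indicator measurableSet_Iic)
        ((hint x).sub (hint q)) hpt2
    rw [integral_indicator measurableSet_Iic, setIntegral_const,
      integral_sub (hint x) (hint q), ← cdf_eq_real, hq, smul_eq_mul] at hmono
    nlinarith [hmono]
  · rw [hq, sub_self, mul_zero, zero_add, ← mul_assoc,
      mul_one_div_cancel (ne_of_gt hα.1), one_mul]
end

section
/- Consistency of the elementary (VaR, ES) score S_{v₂}: let α ∈ (0,1), v₂ ∈ ℝ, and Y a random variable with continuous strictly increasing CDF F and finite mean. Set q = VaR_α(F) = F⁻¹(α) and e = ES_α(F) = (1/α)E[Y·1{Y ≤ q}] (so e ≤ q). Then for all (x₁, x₂) with x₁ ≥ x₂, E[S_{v₂}(q, e, Y)] ≤ E[S_{v₂}(x₁, x₂, Y)], where S_{v₂}(x₁, x₂, y) = 1{v₂ ≤ x₂}((1/α)·1{y ≤ x₁}(x₁ − y) − (x₁ − v₂)) + 1{v₂ ≤ y}(y − v₂). -/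
open MeasureTheory ProbabilityTheory

/-- Consistency of the elementary (VaR, ES) score: let `α ∈ (0,1)`,
`v₂ ∈ ℝ`, and let `Y ~ μ` have a continuous strictly increasing CDF and
finite mean. With `q = VaR_α(F)` (i.e. `F(q) = α`) and
`e = ES_α(F) = (1/α)E[Y·1{Y ≤ q}]`, for all `(x₁, x₂)` with `x₁ ≥ x₂`,
`E[S_{v₂}(q, e, Y)] ≤ E[S_{v₂}(x₁, x₂, Y)]` where
`S_{v₂}(x₁,x₂,y) = 1{v₂ ≤ x₂}((1/α)·1{y ≤ x₁}(x₁−y) − (x₁−v₂)) + 1{v₂ ≤ y}(y−v₂)`. -/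
theorem elementary_var_es_score_consistent (α v₂ : ℝ)
    (hα : α ∈ Set.Ioo (0 : ℝ) 1)
    (μ : Measure ℝ) [IsProbabilityMeasure μ] (hmean : Integrable id μ)
    (hcont : Continuous fun x => cdf μ x) (hsm : StrictMono fun x => cdf μ x)
    (q e : ℝ) (hq : cdf μ q = α) (he : e = (1 / α) * ∫ y in Set.Iic q, y ∂μ)
    (x₁ x₂ : ℝ) (hx : x₂ ≤ x₁) :
    ∫ y, ((if v₂ ≤ e then (1 : ℝ) else 0) *
          ((1 / α) * (if y ≤ q then (1 : ℝ) else 0) * (q - y) - (q - v₂)) +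
        (if v₂ ≤ y then (1 : ℝ) else 0) * (y - v₂)) ∂μ ≤
      ∫ y, ((if v₂ ≤ x₂ then (1 : ℝ) else 0) *
          ((1 / α) * (if y ≤ x₁ then (1 : ℝ) else 0) * (x₁ - y) - (x₁ - v₂)) +
        (if v₂ ≤ y then (1 : ℝ) else 0) * (y - v₂)) ∂μ := by
  obtain ⟨hα0, hα1⟩ := hα
  have hid : Integrable (fun y : ℝ => y) μ := hmean
  have hμq : (μ (Set.Iic q)).toReal = α := by
    rw [← hq, cdf_eq_real, Measure.real]
  -- integrability of positive parts
  have hmaxInt : ∀ t : ℝ, Integrable (fun y => max (t - y) 0) μ := fun t =>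
    ((integrable_const t).sub hid).pos_part
  -- the common summand
  have hBeq : (fun y => (if v₂ ≤ y then (1 : ℝ) else 0) * (y - v₂))
      = fun y => max (y - v₂) 0 := by
    funext y
    rcases le_or_gt v₂ y with h | h
    · rw [if_pos h, one_mul, max_eq_left (sub_nonneg.mpr h)]
    · rw [if_neg (not_le.mpr h), zero_mul, max_eq_right (sub_nonpos.mpr h.le)]
  have hB : Integrable (fun y => (if v₂ ≤ y then (1 : ℝ) else 0) * (y - v₂)) μ := by
    rw [hBeq]; exact (hid.sub (integrable_const v₂)).pos_part
  -- value of H at q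
  have hHq : ∫ y, max (q - y) 0 ∂μ = α * (q - e) := by
    have h1 : (fun y => max (q - y) 0)
        = Set.indicator (Set.Iic q) (fun y => q - y) := by
      funext y
      rcases le_or_gt y q with h | h
      · rw [Set.indicator_of_mem (Set.mem_Iic.mpr h), max_eq_left (sub_nonneg.mpr h)]
      · rw [Set.indicator_of_notMem (by simpa using h), max_eq_right (sub_nonpos.mpr h.le)]
    have hIe : ∫ y in Set.Iic q, y ∂μ = α * e := by
      rw [he]; field_simp
    rw [h1, integral_indicator measurableSet_Iic,
      integral_sub (integrableOn_const (s := Set.Iic q) (C := q) (measure_ne_top μ _)) hid.integrableOn,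
      setIntegral_const, hIe, Measure.real, hμq, smul_eq_mul]
    ring
  -- key inequality : H is above its tangent at q
  have hkey : ∀ t : ℝ, α * (t - e) ≤ ∫ y, max (t - y) 0 ∂μ := by
    intro t
    have hindInt : Integrable (fun y => (t - q) * (if y ≤ q then (1 : ℝ) else 0)) μ := by
      apply Integrable.const_mul
      have : (fun y : ℝ => if y ≤ q then (1 : ℝ) else 0)
          = Set.indicator (Set.Iic q) (fun _ => (1 : ℝ)) := by
        funext y
        rcases le_or_gt y q with h | h
        · rw [if_pos h, Set.indicator_of_mem (Set.mem_Iic.mpr h)]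
        · rw [if_neg (not_le.mpr h), Set.indicator_of_notMem (by simpa using h)]
      rw [this]
      exact (integrable_const (1 : ℝ)).indicator measurableSet_Iic
    have hpt : ∀ y, max (q - y) 0 + (t - q) * (if y ≤ q then (1 : ℝ) else 0)
        ≤ max (t - y) 0 := by
      intro y
      rcases le_or_gt y q with h | h
      · rw [if_pos h, max_eq_left (sub_nonneg.mpr h), mul_one]
        calc q - y + (t - q) = t - y := by ring
        _ ≤ max (t - y) 0 := le_max_left _ _
      · rw [if_neg (not_le.mpr h), max_eq_right (sub_nonpos.mpr h.le), mul_zero]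
        simpa using le_max_right (t - y) 0
    have hmono := integral_mono ((hmaxInt q).add hindInt) (hmaxInt t) hpt
    simp only [Pi.add_apply] at hmono
    rw [integral_add (hmaxInt q) hindInt, hHq, integral_const_mul] at hmono
    have hIind : ∫ y, (if y ≤ q then (1 : ℝ) else 0) ∂μ = α := by
      have : (fun y : ℝ => if y ≤ q then (1 : ℝ) else 0)
          = Set.indicator (Set.Iic q) (fun _ => (1 : ℝ)) := by
        funext y
        rcases le_or_gt y q with h | h
        · rw [if_pos h, Set.indicator_of_mem (Set.mem_Iic.mpr h)]
        · rw [if_neg (not_le.mpr h), Set.indicator_of_notMem (by simpa using h)]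
      rw [this, integral_indicator_const (1 : ℝ) measurableSet_Iic, Measure.real, hμq, smul_eq_mul, mul_one]
    rw [hIind] at hmono
    calc α * (t - e) = α * (q - e) + (t - q) * α := by ring
    _ ≤ _ := hmono
  -- rewrite both integrals in closed form
  have hrw : ∀ c t : ℝ,
      ∫ y, (c * ((1 / α) * (if y ≤ t then (1 : ℝ) else 0) * (t - y) - (t - v₂)) +
          (if v₂ ≤ y then (1 : ℝ) else 0) * (y - v₂)) ∂μ
        = c * ((1 / α) * (∫ y, max (t - y) 0 ∂μ) - (t - v₂)) +
          ∫ y, (if v₂ ≤ y then (1 : ℝ) else 0) * (y - v₂) ∂μ := by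
    intro c t
    have hA : Integrable (fun y => (1 / α) * max (t - y) 0 - (t - v₂)) μ :=
      ((hmaxInt t).const_mul _).sub (integrable_const _)
    have heq : (fun y => c * ((1 / α) * (if y ≤ t then (1 : ℝ) else 0) * (t - y) - (t - v₂)) +
          (if v₂ ≤ y then (1 : ℝ) else 0) * (y - v₂))
        = fun y => c * ((1 / α) * max (t - y) 0 - (t - v₂)) +
          (if v₂ ≤ y then (1 : ℝ) else 0) * (y - v₂) := by
      funext y
      rcases le_or_gt y t with h | h
      · rw [if_pos h, max_eq_left (sub_nonneg.mpr h)]; ring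
      · rw [if_neg (not_le.mpr h), max_eq_right (sub_nonpos.mpr h.le)]; ring
    rw [heq, integral_add (hA.const_mul c) hB, integral_const_mul,
      integral_sub ((hmaxInt t).const_mul _) (integrable_const _),
      integral_const_mul, integral_const, Measure.real, measure_univ, ENNReal.toReal_one, one_smul]
  rw [hrw, hrw]
  refine add_le_add ?_ le_rfl
  have hq1 : (1 / α) * (∫ y, max (q - y) 0 ∂μ) = q - e := by
    rw [hHq]; field_simp
  have hx1 : x₁ - e ≤ (1 / α) * (∫ y, max (x₁ - y) 0 ∂μ) := by
    have h2 := mul_le_mul_of_nonneg_left (hkey x₁) (le_of_lt (one_div_pos.mpr hα0))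
    calc x₁ - e = (1 / α) * (α * (x₁ - e)) := by field_simp
    _ ≤ _ := h2
  rw [hq1]
  split_ifs with h1 h2 h2 <;> (try push_neg at *) <;> nlinarith
end
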